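/- arXiv:2205.06103 — 2 statements merged into one kernel-verified Lean document; each statement's English description precedes it below -/
import Mathlib

section
/- For the Gamma distribution with shape 2 and scale 2 (Laplace transform Ψ(s) = (1+2s)^{−2}), one has (1/s)·(1 − Ψ(s))/(1 + Ψ(s)) = (2 + 2s)/(1 + 2s + 2s²) for all s > 0, and this equals the Laplace transform of t ↦ √2 · sin((2t+π)/4) · e^{−t/2}. -/
open MeasureTheory Set Real

/-!
Since `√2 sin(t/2 + π/4) = cos(t/2) + sin(t/2)`, the integrand is
`e^{-(s+1/2)t} (cos(t/2) + sin(t/2))`. The Laplace transform of `e^{-at}(p cos ωt + q sin ωt)`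
is the real part of `(p - qi) ∫₀^∞ e^{(-a+iω)t} dt = (p - qi)/(a - iω)`, namely
`(pa + qω)/(a² + ω²)`; with `a = s + 1/2`, `ω = 1/2`, `p = q = 1` this is `(2+2s)/(1+2s+2s²)`.
-/

theorem sqrt_two_mul_sin_add_pi_div_four (x : ℝ) :
    √2 * sin (x + π / 4) = cos x + sin x := by
  rw [sin_add, cos_pi_div_four, sin_pi_div_four]
  linear_combination (cos x + sin x) / 2 * mul_self_sqrt (zero_le_two : (0:ℝ) ≤ 2)

theorem integral_exp_neg_mul_mul_cos_add_sin_Ioi {a : ℝ} (ha : 0 < a) (ω p q : ℝ) :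
    ∫ t in Ioi (0:ℝ), exp (-a * t) * (p * cos (ω * t) + q * sin (ω * t)) =
      (p * a + q * ω) / (a ^ 2 + ω ^ 2) := by
  set z : ℂ := -a + ω * Complex.I
  have hz : z.re < 0 := by simpa [z] using ha
  have hre : ∀ t : ℝ, exp (-a * t) * (p * cos (ω * t) + q * sin (ω * t)) =
      ((p - q * Complex.I) * Complex.exp (z * t)).re := by
    intro t
    have : z * t = (-a * t : ℝ) + (ω * t : ℝ) * Complex.I := by push_cast [z]; ring
    rw [this, Complex.exp_add_mul_I, ← Complex.ofReal_exp, ← Complex.ofReal_cos,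
      ← Complex.ofReal_sin]
    simp only [Complex.mul_re, Complex.mul_im, Complex.sub_re, Complex.sub_im, Complex.add_re,
      Complex.add_im, Complex.ofReal_re, Complex.ofReal_im, Complex.I_re, Complex.I_im]
    ring
  have hlaplace : ∫ t in Ioi (0:ℝ), (p - q * Complex.I) * Complex.exp (z * t) =
      (p - q * Complex.I) / -z := by
    rw [integral_const_mul, integral_exp_mul_complex_Ioi hz]
    simp [div_eq_mul_inv]
  have hint := (integrableOn_exp_mul_complex_Ioi hz 0).const_mul (p - q * Complex.I)
  simp_rw [hre]
  refine (integral_re hint).trans ?_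
  rw [hlaplace]
  have hD : a ^ 2 + ω ^ 2 ≠ 0 := by positivity
  simp only [z, RCLike.re_to_complex, Complex.div_re, Complex.normSq_apply, neg_add_rev, neg_neg,
    Complex.sub_re, Complex.sub_im, Complex.add_re, Complex.add_im, Complex.neg_re, Complex.neg_im,
    Complex.mul_re, Complex.mul_im, Complex.ofReal_re, Complex.ofReal_im, Complex.I_re,
    Complex.I_im, mul_zero, mul_one, sub_self, sub_zero, neg_zero, zero_add, add_zero, mul_neg,
    neg_mul, zero_sub]
  field_simp

/-- for the Gamma distribution with shape 2 and scale 2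
(Laplace transform `Ψ(s) = (1+2s)⁻²`), one has
`(1/s)(1 − Ψ(s))/(1 + Ψ(s)) = (2+2s)/(1+2s+2s²)` for all `s > 0`, and this is the
Laplace transform of `t ↦ √2 sin((2t+π)/4) e^{−t/2}`. -/
theorem stmt_12 :
    ∀ s : ℝ, 0 < s →
      (1 / s) * (1 - ((1 + 2 * s) ^ 2)⁻¹) / (1 + ((1 + 2 * s) ^ 2)⁻¹) =
        (2 + 2 * s) / (1 + 2 * s + 2 * s ^ 2) ∧
      (∫ t in Ioi (0:ℝ),
          Real.exp (-s * t) *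
            (Real.sqrt 2 * Real.sin ((2 * t + π) / 4) * Real.exp (-t / 2))) =
        (2 + 2 * s) / (1 + 2 * s + 2 * s ^ 2) := by
  intro s hs
  refine ⟨?_, ?_⟩
  · field_simp
    ring
  · have hintegrand : ∀ t : ℝ,
        exp (-s * t) * (√2 * sin ((2 * t + π) / 4) * exp (-t / 2)) =
          exp (-(s + 1 / 2) * t) * (1 * cos (1 / 2 * t) + 1 * sin (1 / 2 * t)) := by
      intro t
      rw [show (2 * t + π) / 4 = 1 / 2 * t + π / 4 by ring, sqrt_two_mul_sin_add_pi_div_four,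
        show -(s + 1 / 2) * t = -s * t + -t / 2 by ring, exp_add]
      ring
    simp_rw [hintegrand]
    rw [integral_exp_neg_mul_mul_cos_add_sin_Ioi (by positivity)]
    field_simp
    ring
end

section
/- The function E(t) = √2 · sin((2t+π)/4) · e^{−t/2} is not monotone nonincreasing on (0,∞): there exist 0 < t₁ < t₂ with E(t₁) < E(t₂), and moreover E takes negative values on (0,∞). -/
/-! The factor `√2 e^{−t/2}` is positive, so `E` has the sign of `sin((2t+π)/4)`: it is negative
at `t = 2π` (phase `5π/4`) and back to zero at `t = 7π/2` (phase `2π`). -/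

open Real

/-- The expected value function of the switch process with Γ(2,2) switching times. -/
noncomputable def Efun (t : ℝ) : ℝ :=
  Real.sqrt 2 * Real.sin ((2 * t + π) / 4) * Real.exp (-t / 2)

lemma Efun_neg_iff (t : ℝ) : Efun t < 0 ↔ sin ((2 * t + π) / 4) < 0 := by
  have hpos : 0 < √2 * exp (-t / 2) := by positivity
  rw [Efun, mul_right_comm]
  nth_rw 1 [← mul_zero (√2 * exp (-t / 2))]
  exact mul_lt_mul_iff_right₀ hpos

lemma Efun_two_pi_neg : Efun (2 * π) < 0 := by
  rw [Efun_neg_iff, show (2 * (2 * π) + π) / 4 = π / 4 + π by ring, sin_add_pi, sin_pi_div_four]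
  exact neg_neg_of_pos (by positivity)

lemma Efun_seven_pi_div_two : Efun (7 * π / 2) = 0 := by
  rw [Efun, show (2 * (7 * π / 2) + π) / 4 = 2 * π by ring, sin_two_pi, mul_zero, zero_mul]

/-- `E(t) = √2 sin((2t+π)/4) e^{−t/2}` is not monotone nonincreasing on
`(0,∞)`: there are `0 < t₁ < t₂` with `E(t₁) < E(t₂)`, and `E` takes negative values
on `(0,∞)`. -/
theorem stmt_13 :
    (∃ t₁ t₂ : ℝ, 0 < t₁ ∧ t₁ < t₂ ∧ Efun t₁ < Efun t₂) ∧
    (∃ t : ℝ, 0 < t ∧ Efun t < 0) := by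
  have hπ := pi_pos
  refine ⟨⟨2 * π, 7 * π / 2, by positivity, by linarith, ?_⟩,
    ⟨2 * π, by positivity, Efun_two_pi_neg⟩⟩
  rw [Efun_seven_pi_div_two]
  exact Efun_two_pi_neg
end
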